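/- Let x = [a,b], y = [b,c], z = a y a, t = c x c y⁻¹ x⁻¹, w = a t a in IMG(z²+i). Then the wreath recursions y = (x,1), z = (1,x), t = (y,1), and w = (1,y) hold. -/

import Mathlib

/-- The generator `a = (1,1)σ` of `IMG(z²+i)`, acting on the binary rooted tree
whose vertices are finite binary words. -/
def aF : List Bool → List Bool
  | [] => []
  | x :: s => (!x) :: s

mutual
/-- The generator `b = (a, c)` of `IMG(z²+i)`. -/
def bF : List Bool → List Bool
  | [] => []
  | false :: s => false :: aF s
  | true :: s => true :: cF s
/-- The generator `c = (b, 1)` of `IMG(z²+i)`. -/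
def cF : List Bool → List Bool
  | [] => []
  | false :: s => false :: bF s
  | true :: s => true :: s
end

theorem aF_invol : ∀ s, aF (aF s) = s := by
  intro s; cases s <;> simp [aF]

theorem bcF_invol : ∀ s, bF (bF s) = s ∧ cF (cF s) = s := by
  intro s
  induction s with
  | nil => exact ⟨rfl, rfl⟩
  | cons x s ih =>
    cases x <;> exact ⟨by simp [bF, ih.1, ih.2, aF_invol], by simp [cF, ih.1]⟩

/-- `a` as a tree automorphism. -/
def aE : Equiv.Perm (List Bool) := ⟨aF, aF, aF_invol, aF_invol⟩
/-- `b` as a tree automorphism. -/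
def bE : Equiv.Perm (List Bool) := ⟨bF, bF, fun s => (bcF_invol s).1, fun s => (bcF_invol s).1⟩
/-- `c` as a tree automorphism. -/
def cE : Equiv.Perm (List Bool) := ⟨cF, cF, fun s => (bcF_invol s).2, fun s => (bcF_invol s).2⟩

open scoped commutatorElement

/-- `x = [a,b]`. -/
def xE : Equiv.Perm (List Bool) := ⁅aE, bE⁆
/-- `y = [b,c]`. -/
def yE : Equiv.Perm (List Bool) := ⁅bE, cE⁆
/-- `z = a y a`. -/
def zE : Equiv.Perm (List Bool) := aE * yE * aE
/-- `t = c x c y⁻¹ x⁻¹`. -/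
def tE : Equiv.Perm (List Bool) := cE * xE * cE * yE⁻¹ * xE⁻¹
/-- `w = a t a`. -/
def wE : Equiv.Perm (List Bool) := aE * tE * aE


/-! Sections multiply: if `g = (g₀, g₁)` and `h = (h₀, h₁)` then `gh = (g₀h₀, g₁h₁)`, and
conjugation by `a` swaps them. Since `aba = (c, a)`, we get `x = (aba)b = (ca, ac)`, and
`y = [b,c] = ([a,b], [c,1]) = (x, 1)`. The section of `t` at `0` is `b(ca)b x⁻¹(ca)⁻¹`, which
collapses to `bcbc = y` because `a`, `b`, `c` are involutions; at `1` it is `(ac)(ac)⁻¹ = 1`.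
Finally `z` and `w` are the conjugates of `y` and `t` by `a`. -/

section Sections

open Equiv

/-- `HasSections g g₀ g₁` says that `g` fixes the first level and `g = (g₀, g₁)`. -/
def HasSections (g g₀ g₁ : Perm (List Bool)) : Prop :=
  ∀ s, g (false :: s) = false :: g₀ s ∧ g (true :: s) = true :: g₁ s

variable {g g₀ g₁ h h₀ h₁ : Perm (List Bool)}

theorem HasSections.mul (hg : HasSections g g₀ g₁) (hh : HasSections h h₀ h₁) :
    HasSections (g * h) (g₀ * h₀) (g₁ * h₁) := fun s => by
  simp only [Perm.mul_apply, (hh s).1, (hh s).2, (hg _).1, (hg _).2, and_self]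

theorem HasSections.inv (hg : HasSections g g₀ g₁) : HasSections g⁻¹ g₀⁻¹ g₁⁻¹ := fun s => by
  simp only [Perm.inv_eq_iff_eq, (hg _).1, (hg _).2, ← Perm.mul_apply, mul_inv_cancel,
    Perm.one_apply, and_self]

theorem HasSections.commutator (hg : HasSections g g₀ g₁) (hh : HasSections h h₀ h₁) :
    HasSections ⁅g, h⁆ ⁅g₀, h₀⁆ ⁅g₁, h₁⁆ :=
  ((hg.mul hh).mul hg.inv).mul hh.inv

theorem HasSections.conj_aE (hg : HasSections g g₀ g₁) : HasSections (aE * g * aE) g₁ g₀ :=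
  fun s => ⟨(congrArg aF (hg s).2 :), (congrArg aF (hg s).1 :)⟩

theorem hasSections_bE : HasSections bE aE cE := fun _ => ⟨rfl, rfl⟩

theorem hasSections_cE : HasSections cE bE 1 := fun _ => ⟨rfl, rfl⟩

theorem aE_mul_self : aE * aE = 1 := Equiv.ext aF_invol

theorem bE_mul_self : bE * bE = 1 := Equiv.ext fun s => (bcF_invol s).1

theorem cE_mul_self : cE * cE = 1 := Equiv.ext fun s => (bcF_invol s).2

theorem aE_inv : aE⁻¹ = aE := inv_eq_of_mul_eq_one_right aE_mul_self

theorem bE_inv : bE⁻¹ = bE := inv_eq_of_mul_eq_one_right bE_mul_self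

theorem cE_inv : cE⁻¹ = cE := inv_eq_of_mul_eq_one_right cE_mul_self

theorem mul_self_mul_cancel {G : Type*} [Monoid G] {g : G} (hg : g * g = 1) (h : G) :
    g * (g * h) = h := by
  rw [← mul_assoc, hg, one_mul]

theorem xE_eq : xE = aE * bE * aE * bE := by
  rw [xE, commutatorElement_def, aE_inv, bE_inv]

theorem hasSections_yE : HasSections yE xE 1 := by
  have h := hasSections_bE.commutator hasSections_cE
  rwa [commutatorElement_one_right] at h

theorem hasSections_xE : HasSections xE (cE * aE) (aE * cE) := by
  rw [xE_eq]
  exact hasSections_bE.conj_aE.mul hasSections_bE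

theorem hasSections_tE : HasSections tE yE 1 := by
  have h := (((hasSections_cE.mul hasSections_xE).mul hasSections_cE).mul
    hasSections_yE.inv).mul hasSections_xE.inv
  rw [tE]
  convert h using 1
  · rw [yE, commutatorElement_def, xE_eq]
    simp only [mul_inv_rev, aE_inv, bE_inv, cE_inv, mul_assoc, mul_self_mul_cancel aE_mul_self,
      mul_self_mul_cancel bE_mul_self]
  · group

theorem hasSections_zE : HasSections zE 1 xE := hasSections_yE.conj_aE

theorem hasSections_wE : HasSections wE 1 yE := hasSections_tE.conj_aE

end Sections

/-- The wreath recursions `y = (x,1)`, `z = (1,x)`, `t = (y,1)`, `w = (1,y)`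
hold, where `(g₀,g₁)` records the two first-level sections of a first-level-stabilizing
automorphism of the binary tree. -/
theorem stmt_10 : ∀ s : List Bool,
    (yE (false :: s) = false :: xE s ∧ yE (true :: s) = true :: s) ∧
    (zE (false :: s) = false :: s ∧ zE (true :: s) = true :: xE s) ∧
    (tE (false :: s) = false :: yE s ∧ tE (true :: s) = true :: s) ∧
    (wE (false :: s) = false :: s ∧ wE (true :: s) = true :: yE s) := fun s =>
  ⟨hasSections_yE s, hasSections_zE s, hasSections_tE s, hasSections_wE s⟩
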